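/- arXiv:2102.09197 — 2 statements merged into one kernel-verified Lean document; each statement's English description precedes it below -/
import Mathlib

section
/- Let d ≥ 3 and r ≥ 1 be integers, let m = d(d−1)^{r−1}, and let X₁, …, X_m be independent random variables, each geometric(1/2) on the positive integers. Then P(max_{1≤u≤m} X_u ≤ log₂ m − log₂ log₂ m) < 1/(d(d−1)^{r−1}). -/
open MeasureTheory ProbabilityTheory
open scoped ENNReal

/-!
With `a = log₂ m` and `k = ⌊log₂ m - log₂ a⌋`, the event is `max_u X_u ≤ k`, whose probability is
`(1 - 2^{-k})^m` by independence. Since `2^{-k} ≥ a / m`, this is at most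
`(1 - a/m)^m ≤ e^{-a} = m^{-1/ln 2}`, which is below `1/m` because `ln 2 < 1`.
-/

namespace Real

lemma self_lt_two_rpow {x : ℝ} (hx : 1 ≤ x) : x < 2 ^ x := by
  have bernoulli := one_add_mul_self_le_rpow_one_add (s := 1) (by norm_num) hx
  norm_num at bernoulli
  linarith

lemma logb_two_lt_self {x : ℝ} (hx : 1 ≤ x) : logb 2 x < x :=
  (logb_lt_iff_lt_rpow one_lt_two (by linarith)).2 (self_lt_two_rpow hx)

lemma div_le_inv_two_pow_of_le_logb_sub_logb {x y : ℝ} (hx : 0 < x) (hy : 0 < y) {k : ℕ}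
    (hk : (k : ℝ) ≤ logb 2 x - logb 2 y) : y / x ≤ 2⁻¹ ^ k := by
  calc y / x = (2 : ℝ) ^ (-(logb 2 x - logb 2 y)) := by
        rw [neg_sub, rpow_sub two_pos, rpow_logb two_pos (by norm_num) hx,
          rpow_logb two_pos (by norm_num) hy]
    _ ≤ (2 : ℝ) ^ (-(k : ℝ)) := rpow_le_rpow_of_exponent_le one_le_two (by linarith)
    _ = 2⁻¹ ^ k := by rw [rpow_neg zero_le_two, rpow_natCast, inv_pow]

lemma exp_neg_logb_two_lt_inv {x : ℝ} (hx : 1 < x) : exp (-logb 2 x) < x⁻¹ := by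
  have hlog : 0 < log x := log_pos hx
  have hlog_lt_logb : log x < logb 2 x := by
    rw [logb, lt_div_iff₀ (log_pos one_lt_two)]
    nlinarith [log_two_lt_d9]
  calc exp (-logb 2 x) < exp (-log x) := exp_lt_exp.2 (by linarith)
    _ = x⁻¹ := by rw [exp_neg, exp_log (by linarith)]

end Real

open Real in
lemma one_sub_inv_two_pow_pow_lt_inv {m : ℕ} (hm : 1 < m) {k : ℕ}
    (hk : (k : ℝ) ≤ logb 2 m - logb 2 (logb 2 m)) :
    (1 - (2⁻¹ : ℝ) ^ k) ^ m < (m : ℝ)⁻¹ := by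
  have hm' : (1 : ℝ) < m := by exact_mod_cast hm
  set a := logb 2 (m : ℝ)
  have ha : 0 < a := logb_pos one_lt_two hm'
  have hquot : a / m ≤ 2⁻¹ ^ k := div_le_inv_two_pow_of_le_logb_sub_logb (by linarith) ha hk
  calc (1 - (2⁻¹ : ℝ) ^ k) ^ m ≤ exp (-(a / m)) ^ m := by
        gcongr
        · exact sub_nonneg.2 (pow_le_one₀ (by norm_num) (by norm_num))
        · exact (sub_le_sub_left hquot 1).trans (one_sub_le_exp_neg _)
    _ = exp (-a) := by rw [← exp_nat_mul]; field_simp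
    _ < (m : ℝ)⁻¹ := exp_neg_logb_two_lt_inv hm'

section Geometric

variable {Ω : Type*} [MeasurableSpace Ω] {μ : Measure Ω}

lemma measure_preimage_Iic_of_geometric [IsProbabilityMeasure μ] {Y : Ω → ℕ} (hY : Measurable Y)
    (hgeom : ∀ s : ℕ, 1 ≤ s → μ {ω | Y ω = s} = ((1 : ℝ≥0∞) / 2) ^ s) (k : ℕ) :
    μ (Y ⁻¹' Set.Iic k) = 1 - 2⁻¹ ^ k := by
  have htail_eq : (Y ⁻¹' Set.Iic k)ᶜ = ⋃ j : ℕ, Y ⁻¹' {k + 1 + j} := by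
    ext ω
    simp only [Set.mem_compl_iff, Set.mem_preimage, Set.mem_Iic, not_le, Set.mem_iUnion,
      Set.mem_singleton_iff]
    exact ⟨fun h => ⟨Y ω - (k + 1), by omega⟩, fun ⟨j, hj⟩ => by omega⟩
  have htail : μ (Y ⁻¹' Set.Iic k)ᶜ = 2⁻¹ ^ k := by
    rw [htail_eq, measure_iUnion]
    · have hpoint (j : ℕ) : μ (Y ⁻¹' {k + 1 + j}) = 2⁻¹ ^ (k + 1) * 2⁻¹ ^ j := by
        simpa [Set.preimage, one_div, pow_add] using hgeom (k + 1 + j) (by omega)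
      simp_rw [hpoint]
      rw [ENNReal.tsum_mul_left, ENNReal.tsum_geometric, ENNReal.one_sub_inv_two, inv_inv,
        pow_succ, mul_assoc, ENNReal.inv_mul_cancel two_ne_zero ENNReal.ofNat_ne_top, mul_one]
    · intro i j hij
      simp only [Function.onFun, Set.disjoint_left, Set.mem_preimage, Set.mem_singleton_iff]
      omega
    · exact fun j => hY (measurableSet_singleton _)
  rw [← htail, ← prob_compl_eq_one_sub (hY measurableSet_Iic).compl, compl_compl]

lemma measure_sup_le_of_iIndepFun_geometric [IsProbabilityMeasure μ] {ι : Type*} [Fintype ι]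
    {X : ι → Ω → ℕ} (hmeas : ∀ u, Measurable (X u)) (hindep : iIndepFun X μ)
    (hgeom : ∀ u, ∀ s : ℕ, 1 ≤ s → μ {ω | X u ω = s} = ((1 : ℝ≥0∞) / 2) ^ s) (k : ℕ) :
    μ {ω | Finset.univ.sup (X · ω) ≤ k} = (1 - 2⁻¹ ^ k) ^ Fintype.card ι := by
  have hevent : {ω | Finset.univ.sup (X · ω) ≤ k} = ⋂ u ∈ Finset.univ, X u ⁻¹' Set.Iic k := by
    ext ω
    simp [Finset.sup_le_iff]
  rw [hevent, hindep.measure_inter_preimage_eq_mul _ (fun _ _ => measurableSet_Iic)]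
  simp [measure_preimage_Iic_of_geometric (hmeas _) (hgeom _)]

end Geometric

theorem stmt6_general {Ω : Type*} [MeasurableSpace Ω] (μ : Measure Ω) [IsProbabilityMeasure μ]
    (d r : ℕ) (hd : 3 ≤ d)
    (m : ℕ) (hm : m = d * (d - 1) ^ (r - 1))
    (X : Fin m → Ω → ℕ)
    (hmeas : ∀ u, Measurable (X u))
    (hindep : iIndepFun X μ)
    (hgeom : ∀ u, ∀ s : ℕ, 1 ≤ s → μ {ω | X u ω = s} = ((1 : ℝ≥0∞) / 2) ^ s) :
    μ {ω | ((Finset.univ.sup fun u => X u ω : ℕ) : ℝ)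
        ≤ Real.logb 2 m - Real.logb 2 (Real.logb 2 m)}
      < 1 / ((d : ℝ≥0∞) * ((d : ℝ≥0∞) - 1) ^ (r - 1)) := by
  have hm1 : 1 < m := by
    have : 1 ≤ (d - 1) ^ (r - 1) := Nat.one_le_pow _ _ (by omega)
    rw [hm]; nlinarith
  set L := Real.logb 2 m - Real.logb 2 (Real.logb 2 m)
  have hL : 0 ≤ L := by
    have ha : 1 ≤ Real.logb 2 (m : ℝ) := by
      rw [Real.le_logb_iff_rpow_le one_lt_two (by positivity)]
      exact_mod_cast (by omega : 2 ≤ m)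
    linarith [Real.logb_two_lt_self ha]
  have hevent : {ω | ((Finset.univ.sup fun u => X u ω : ℕ) : ℝ) ≤ L}
      = {ω | Finset.univ.sup (X · ω) ≤ ⌊L⌋₊} := by
    ext ω
    exact (Nat.le_floor_iff hL).symm
  have hrhs : 1 / ((d : ℝ≥0∞) * ((d : ℝ≥0∞) - 1) ^ (r - 1)) = (m : ℝ≥0∞)⁻¹ := by
    rw [hm, one_div, ← Nat.cast_one, ← ENNReal.natCast_sub]
    push_cast
    rfl
  rw [hevent, measure_sup_le_of_iIndepFun_geometric hmeas hindep hgeom, Fintype.card_fin, hrhs,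
    ← ENNReal.toReal_lt_toReal (by simp) (by simp; omega)]
  have hle_one : (2⁻¹ : ℝ≥0∞) ^ ⌊L⌋₊ ≤ 1 := pow_le_one₀ (by positivity) (by norm_num)
  simpa [ENNReal.toReal_sub_of_le hle_one ENNReal.one_ne_top]
    using one_sub_inv_two_pow_pow_lt_inv hm1 (Nat.floor_le hL)

/-- Let `d ≥ 3` and `r ≥ 1` be integers, let `m = d(d−1)^{r−1}`, and let
`X₁, …, X_m` be independent geometric(1/2) random variables on the positive integers. Then
`P(max_u X_u ≤ log₂ m − log₂ log₂ m) < 1/(d(d−1)^{r−1})`. -/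
theorem stmt6 {Ω : Type*} [MeasurableSpace Ω] (μ : Measure Ω) [IsProbabilityMeasure μ]
    (d r : ℕ) (hd : 3 ≤ d) (hr : 1 ≤ r)
    (m : ℕ) (hm : m = d * (d - 1) ^ (r - 1))
    (X : Fin m → Ω → ℕ)
    (hmeas : ∀ u, Measurable (X u))
    (hindep : iIndepFun X μ)
    (hgeom : ∀ u, ∀ s : ℕ, 1 ≤ s → μ {ω | X u ω = s} = ((1 : ℝ≥0∞) / 2) ^ s) :
    μ {ω | ((Finset.univ.sup fun u => X u ω : ℕ) : ℝ)
        ≤ Real.logb 2 m - Real.logb 2 (Real.logb 2 m)}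
      < 1 / ((d : ℝ≥0∞) * ((d : ℝ≥0∞) - 1) ^ (r - 1)) :=
  stmt6_general μ d r hd m hm X hmeas hindep hgeom
end

section
/- Let H and G be finite simple graphs on the same vertex set of size n ≥ 2, suppose every vertex of H has degree at most d where d ≥ 4, and suppose that for a fixed integer k ≥ 1 every edge {u,w} of G satisfies dist_H(u,w) ≤ k. Let 0 < δ ≤ 1 and set a = δ/(10·k·log₂(d−1)). Then for every set Bad of vertices with |Bad| ≤ 2n^{1−δ}, the number of vertices v with dist_G(v, Bad) ≤ a·log₂ n is at most 2(d−1)·n^{1−9δ/10}. -/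
/-!
Every edge of `G` spans an `H`-distance of at most `k`, so the `G`-neighbourhood of `Bad` of
radius `r = ⌊a log n⌋` lies in the union of the `H`-balls of radius `k r` around `Bad`. When all
degrees are at most `d`, each sphere about a vertex is at most `d - 1` times larger than the
previous one (from radius one on), so for `d ≥ 4` a ball of radius `t` has at most `2 (d - 1)^t`
vertices. The choice of `a` makes `(d - 1)^(k r) ≤ n^(δ/10)`, and the count is at most
`2 n^(1-δ) · 2 n^(δ/10) = 4 n^(1 - 9δ/10)`.
-/

open Finset

namespace SimpleGraph

variable {V : Type*} {G H : SimpleGraph V} {u v w : V}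

theorem Reachable.exists_adj_dist_eq {s : ℕ} (hr : G.Reachable u w) (hs : G.dist u w = s + 1) :
    ∃ x, G.Adj u x ∧ G.Reachable x w ∧ G.dist x w = s := by
  obtain ⟨p, hp⟩ := hr.exists_walk_length_eq_dist
  have hnil : ¬p.Nil := by rw [← Walk.length_eq_zero_iff]; omega
  have hadj := p.adj_snd hnil
  refine ⟨p.snd, hadj, p.tail.reachable, le_antisymm ?_ ?_⟩
  · have := Walk.length_tail_add_one hnil
    have := dist_le p.tail
    omega
  · have := hadj.reachable.dist_triangle_left w
    rw [dist_eq_one_iff_adj.mpr hadj] at this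
    omega

theorem Walk.reachable_and_dist_le_mul_length {k : ℕ}
    (hGH : ∀ u w, G.Adj u w → H.Reachable u w ∧ H.dist u w ≤ k) (p : G.Walk v w) :
    H.Reachable v w ∧ H.dist v w ≤ k * p.length := by
  induction p with
  | nil => simp
  | cons hadj p ih =>
    obtain ⟨hr, hd⟩ := hGH _ _ hadj
    refine ⟨hr.trans ih.1, ?_⟩
    calc _ ≤ H.dist _ _ + H.dist _ _ := ih.1.dist_triangle_right _
      _ ≤ k + k * p.length := add_le_add hd ih.2
      _ = k * (cons hadj p).length := by rw [length_cons]; ring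

theorem Reachable.reachable_and_dist_le_mul_dist {k : ℕ}
    (hGH : ∀ u w, G.Adj u w → H.Reachable u w ∧ H.dist u w ≤ k) (h : G.Reachable v w) :
    H.Reachable v w ∧ H.dist v w ≤ k * G.dist v w := by
  obtain ⟨p, hp⟩ := h.exists_walk_length_eq_dist
  exact hp ▸ p.reachable_and_dist_le_mul_length hGH

section Counting

variable [Fintype V]

variable (G) in
open Classical in
noncomputable def distSphere (w : V) (s : ℕ) : Finset V :=
  {v | G.Reachable v w ∧ G.dist v w = s}

variable (G) in
open Classical in
noncomputable def distClosedBall (w : V) (t : ℕ) : Finset V :=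
  {v | G.Reachable v w ∧ G.dist v w ≤ t}

@[simp]
theorem mem_distSphere {s : ℕ} :
    v ∈ G.distSphere w s ↔ G.Reachable v w ∧ G.dist v w = s := by
  simp [distSphere]

@[simp]
theorem mem_distClosedBall {t : ℕ} :
    v ∈ G.distClosedBall w t ↔ G.Reachable v w ∧ G.dist v w ≤ t := by
  simp [distClosedBall]

variable [DecidableRel G.Adj] {d : ℕ}

theorem card_distSphere_one_le (hdeg : ∀ v, G.degree v ≤ d) (w : V) :
    #(G.distSphere w 1) ≤ d := by
  calc #(G.distSphere w 1) ≤ #(G.neighborFinset w) := by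
        refine card_le_card fun v hv ↦ ?_
        rw [mem_distSphere, dist_eq_one_iff_adj] at hv
        exact (mem_neighborFinset _ _ _).2 hv.2.symm
    _ ≤ d := (card_neighborFinset_eq_degree G w).trans_le (hdeg w)

/-- Each vertex at distance `s + 2` has a neighbour at distance `s + 1`, while each vertex at
distance `s + 1` spends one of its at most `d` edges on a neighbour at distance `s`. -/
theorem card_distSphere_add_two_le (hdeg : ∀ v, G.degree v ≤ d) (w : V) (s : ℕ) :
    #(G.distSphere w (s + 2)) ≤ (d - 1) * #(G.distSphere w (s + 1)) := by
  classical
  have hup : ∀ v ∈ G.distSphere w (s + 2),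
      1 ≤ #(bipartiteAbove G.Adj (G.distSphere w (s + 1)) v) := by
    intro v hv
    rw [mem_distSphere] at hv
    obtain ⟨u, hvu, hu, hdu⟩ := hv.1.exists_adj_dist_eq hv.2
    exact card_pos.2 ⟨u, (mem_bipartiteAbove _).2 ⟨mem_distSphere.2 ⟨hu, hdu⟩, hvu⟩⟩
  have hdown : ∀ u ∈ G.distSphere w (s + 1),
      #(bipartiteBelow G.Adj (G.distSphere w (s + 2)) u) ≤ d - 1 := by
    intro u hu
    rw [mem_distSphere] at hu
    obtain ⟨x, hux, -, hdx⟩ := hu.1.exists_adj_dist_eq hu.2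
    have hsub :
        bipartiteBelow G.Adj (G.distSphere w (s + 2)) u ⊆ (G.neighborFinset u).erase x := by
      intro v hv
      rw [mem_bipartiteBelow, mem_distSphere] at hv
      refine mem_erase.2 ⟨?_, (mem_neighborFinset _ _ _).2 hv.2.symm⟩
      rintro rfl
      omega
    calc _ ≤ #((G.neighborFinset u).erase x) := card_le_card hsub
      _ = G.degree u - 1 := by
        rw [card_erase_of_mem ((mem_neighborFinset _ _ _).2 hux), card_neighborFinset_eq_degree]
      _ ≤ d - 1 := Nat.sub_le_sub_right (hdeg u) 1
  simpa [mul_comm] using card_mul_le_card_mul G.Adj hup hdown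

theorem card_distSphere_succ_le (hdeg : ∀ v, G.degree v ≤ d) (w : V) (s : ℕ) :
    #(G.distSphere w (s + 1)) ≤ d * (d - 1) ^ s := by
  induction s with
  | zero => simpa using card_distSphere_one_le hdeg w
  | succ s ih =>
    calc #(G.distSphere w (s + 2)) ≤ (d - 1) * #(G.distSphere w (s + 1)) :=
          card_distSphere_add_two_le hdeg w s
      _ ≤ (d - 1) * (d * (d - 1) ^ s) := Nat.mul_le_mul_left _ ih
      _ = d * (d - 1) ^ (s + 1) := by ring

theorem card_distClosedBall_le (hd : 4 ≤ d) (hdeg : ∀ v, G.degree v ≤ d) (w : V) (t : ℕ) :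
    #(G.distClosedBall w t) ≤ 2 * (d - 1) ^ t := by
  classical
  induction t with
  | zero =>
    have : G.distClosedBall w 0 ⊆ {w} := fun v hv ↦ by
      rw [mem_distClosedBall, Nat.le_zero, hv.1.dist_eq_zero_iff] at hv
      exact mem_singleton.2 hv.2
    simpa using (card_le_card this).trans (by norm_num)
  | succ t ih =>
    have hsub : G.distClosedBall w (t + 1) ⊆ G.distClosedBall w t ∪ G.distSphere w (t + 1) :=
      fun v hv ↦ by
        rw [mem_distClosedBall, Nat.le_succ_iff] at hv
        rw [mem_union, mem_distClosedBall, mem_distSphere]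
        exact hv.2.imp (⟨hv.1, ·⟩) (⟨hv.1, ·⟩)
    calc #(G.distClosedBall w (t + 1))
        ≤ #(G.distClosedBall w t) + #(G.distSphere w (t + 1)) :=
          (card_le_card hsub).trans (card_union_le _ _)
      _ ≤ 2 * (d - 1) ^ t + d * (d - 1) ^ t :=
          add_le_add ih (card_distSphere_succ_le hdeg w t)
      _ = (2 + d) * (d - 1) ^ t := by ring
      _ ≤ 2 * (d - 1) * (d - 1) ^ t := Nat.mul_le_mul_right _ (by omega)
      _ = 2 * (d - 1) ^ (t + 1) := by ring

theorem ncard_setOf_exists_dist_le_le (hd : 4 ≤ d) (hdeg : ∀ v, G.degree v ≤ d) (S : Set V)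
    (t : ℕ) :
    {v | ∃ w ∈ S, G.Reachable v w ∧ G.dist v w ≤ t}.ncard ≤ S.ncard * (2 * (d - 1) ^ t) := by
  classical
  calc {v | ∃ w ∈ S, G.Reachable v w ∧ G.dist v w ≤ t}.ncard
      ≤ #(S.toFinset.biUnion (G.distClosedBall · t)) := by
        rw [← Set.ncard_coe_finset]
        exact Set.ncard_le_ncard fun v ⟨w, hw, hv⟩ ↦
          mem_coe.2 (mem_biUnion.2 ⟨w, Set.mem_toFinset.2 hw, mem_distClosedBall.2 hv⟩)
    _ ≤ ∑ w ∈ S.toFinset, #(G.distClosedBall w t) := card_biUnion_le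
    _ ≤ #S.toFinset * (2 * (d - 1) ^ t) :=
        sum_le_card_nsmul _ _ _ fun w _ ↦ card_distClosedBall_le hd hdeg w t
    _ = S.ncard * (2 * (d - 1) ^ t) := by rw [Set.ncard_eq_toFinset_card']

end Counting

end SimpleGraph

theorem stmt16_general {V : Type*} [Fintype V] (H G : SimpleGraph V) [DecidableRel H.Adj]
    (n d k : ℕ) (hn2 : 2 ≤ n) (hd : 4 ≤ d) (hk : 1 ≤ k)
    (hdeg : ∀ v, H.degree v ≤ d)
    (hGH : ∀ u w, G.Adj u w → H.Reachable u w ∧ H.dist u w ≤ k)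
    (δ : ℝ) (hδ0 : 0 < δ)
    (a : ℝ) (ha : a = δ / (10 * k * Real.logb 2 ((d : ℝ) - 1)))
    (Bad : Set V) (hBad : (Bad.ncard : ℝ) ≤ 2 * (n : ℝ) ^ ((1 : ℝ) - δ)) :
    ({v | ∃ w ∈ Bad, G.Reachable v w ∧ (G.dist v w : ℝ) ≤ a * Real.logb 2 n}.ncard : ℝ)
      ≤ 2 * ((d : ℝ) - 1) * (n : ℝ) ^ (1 - 9 * δ / 10) := by
  have hd3 : (3 : ℝ) ≤ d - 1 := by
    have : (4 : ℝ) ≤ d := by exact_mod_cast hd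
    linarith
  have hn : (2 : ℝ) ≤ n := by exact_mod_cast hn2
  have hlogd : 0 < Real.log (d - 1) := Real.log_pos (by linarith)
  have hradius : 0 ≤ a * Real.logb 2 n := by
    rw [ha]
    have := Real.logb_nonneg one_lt_two (by linarith : (1 : ℝ) ≤ n)
    have := Real.logb_pos one_lt_two (by linarith : (1 : ℝ) < d - 1)
    positivity
  set r := ⌊a * Real.logb 2 n⌋₊
  have hkr : (k * r : ℕ) * Real.log (d - 1) ≤ δ / 10 * Real.log n := by
    have hk0 : (k : ℝ) ≠ 0 := by positivity
    calc (k * r : ℕ) * Real.log (d - 1) ≤ k * (a * Real.logb 2 n) * Real.log (d - 1) := by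
          push_cast
          gcongr
          exact Nat.floor_le hradius
      _ = δ / 10 * Real.log n := by
          rw [ha, Real.logb, Real.logb]
          field_simp
  have hgrowth : ((d - 1 : ℕ) : ℝ) ^ (k * r) ≤ (n : ℝ) ^ (δ / 10) := by
    rw [Nat.cast_sub (by omega), Nat.cast_one,
      Real.pow_le_iff_le_log (by linarith) (by positivity), Real.log_rpow (by linarith)]
    exact hkr
  have hcover : {v | ∃ w ∈ Bad, G.Reachable v w ∧ (G.dist v w : ℝ) ≤ a * Real.logb 2 n} ⊆
      {v | ∃ w ∈ Bad, H.Reachable v w ∧ H.dist v w ≤ k * r} := by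
    rintro v ⟨w, hw, hvw, hdist⟩
    obtain ⟨hHvw, hHdist⟩ := hvw.reachable_and_dist_le_mul_dist hGH
    exact ⟨w, hw, hHvw, hHdist.trans (Nat.mul_le_mul_left k (Nat.le_floor hdist))⟩
  have hcount := (Set.ncard_le_ncard hcover).trans
    (H.ncard_setOf_exists_dist_le_le hd hdeg Bad (k * r))
  calc _ ≤ (Bad.ncard : ℝ) * (2 * ((d - 1 : ℕ) : ℝ) ^ (k * r)) := mod_cast hcount
    _ ≤ 2 * (n : ℝ) ^ (1 - δ) * (2 * (n : ℝ) ^ (δ / 10)) := by gcongr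
    _ = 4 * (n : ℝ) ^ (1 - 9 * δ / 10) := by
        rw [show 1 - 9 * δ / 10 = (1 - δ) + δ / 10 by ring, Real.rpow_add (by linarith)]
        ring
    _ ≤ 2 * ((d : ℝ) - 1) * (n : ℝ) ^ (1 - 9 * δ / 10) := by gcongr; linarith

/-- Let `H` and `G` be finite simple graphs on the same vertex set of size
`n ≥ 2`, suppose every vertex of `H` has degree at most `d` where `d ≥ 4`, and suppose that for a
fixed integer `k ≥ 1` every edge `{u,w}` of `G` satisfies `dist_H(u,w) ≤ k`. Let `0 < δ ≤ 1` and
set `a = δ/(10·k·log₂(d−1))`. Then for every set `Bad` of vertices with `|Bad| ≤ 2n^{1−δ}`, the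
number of vertices `v` with `dist_G(v, Bad) ≤ a·log₂ n` is at most `2(d−1)·n^{1−9δ/10}`. -/
theorem stmt16 {V : Type*} [Fintype V] (H G : SimpleGraph V) [DecidableRel H.Adj]
    (n d k : ℕ) (hn : Fintype.card V = n) (hn2 : 2 ≤ n) (hd : 4 ≤ d) (hk : 1 ≤ k)
    (hdeg : ∀ v, H.degree v ≤ d)
    (hGH : ∀ u w, G.Adj u w → H.Reachable u w ∧ H.dist u w ≤ k)
    (δ : ℝ) (hδ0 : 0 < δ) (hδ1 : δ ≤ 1)
    (a : ℝ) (ha : a = δ / (10 * k * Real.logb 2 ((d : ℝ) - 1)))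
    (Bad : Set V) (hBad : (Bad.ncard : ℝ) ≤ 2 * (n : ℝ) ^ ((1 : ℝ) - δ)) :
    ({v | ∃ w ∈ Bad, G.Reachable v w ∧ (G.dist v w : ℝ) ≤ a * Real.logb 2 n}.ncard : ℝ)
      ≤ 2 * ((d : ℝ) - 1) * (n : ℝ) ^ (1 - 9 * δ / 10) :=
  stmt16_general H G n d k hn2 hd hk hdeg hGH δ hδ0 a ha Bad hBad
end
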